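/- (Proposition 8) Suppose φ'' ∈ WLSC(α−2, c, x₀) for some c ∈ (0,1], x₀ ≥ 0 and α > 0. Then (i) ψ*(x) ≈ Φ*(x) for all x > x₀ (two-sided comparability with constants independent of x); (ii) ψ^{−1}(r) ≈ Φ^{−1}(r) for all r > Φ(x₀); and (iii) there is C ≥ 1 such that Φ^{−1}(λ r) ≤ C λ^{1/α} Φ^{−1}(r) for all λ ≥ 1 and r > Φ(x₀). -/

import Mathlib

/-!
Both `ψ*` and `Φ*` are compared with `g r = σ² r² + ∫ min 1 ((r s)²) ν(ds)`, the Pruitt function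
`h` at `1 / r`. The bounds `ψ* ≤ 2 g` and `Φ* ≤ 2 g` are pointwise, from `1 - cos t ≤ 2 min 1 t²`
and `t² e⁻ᵗ ≤ 2 min 1 t²`; averaging `1 - cos (u s)` over `u ∈ (0, r]` gives `g ≤ 21 ψ*`. For
`g ≲ Φ*`, the part of `g` coming from `s ≤ 1 / r` is at most `3 Φ r`, and the tail `ν (1/r, ∞)` is
cut into the dyadic pieces `[2ᵏ/r, 2ᵏ⁺¹/r)`, each of measure at most `e² Φ (r / 2ᵏ)`; the weak lower
scaling of `Φ` turns their sum into a geometric series times `Φ r`.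

`Φ*` and `ψ*` are continuous, nondecreasing and map `(0, ∞)` onto itself, so the generalized inverses
satisfy `F (F⁻¹ r) = r`. Beyond some `x₁ ≥ x₀` the running supremum `Φ*` inherits the lower scaling
of `Φ`, which turns `Φ* t ≤ K Φ* p` into `t ≤ (K / c)^(1/α) p`; this gives (ii) and (iii) when the
relevant inverse exceeds `x₁`. Otherwise `x₀ > 0`, and `r > Φ x₀ > 0` keeps the inverses away from `0`.
-/

open MeasureTheory Real Set Filter

noncomputable section

/-- Weak lower scaling property at infinity: `f(l*x) ≥ c * l^τ * f(x)` for `l ≥ 1`, `x > x₁`. -/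
def WLSC (f : ℝ → ℝ) (τ c x₁ : ℝ) : Prop :=
  ∀ l : ℝ, 1 ≤ l → ∀ x : ℝ, x₁ < x → c * l ^ τ * f x ≤ f (l * x)

/-- Weak upper scaling property at infinity: `f(l*x) ≤ C * l^τ * f(x)` for `l ≥ 1`, `x > x₁`. -/
def WUSC (f : ℝ → ℝ) (τ C x₁ : ℝ) : Prop :=
  ∀ l : ℝ, 1 ≤ l → ∀ x : ℝ, x₁ < x → f (l * x) ≤ C * l ^ τ * f x

/-- The Pruitt function `K(r) = σ²/r² + r⁻² ∫_{(0,r)} s² ν(ds)`. -/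
def pruittK (σ : ℝ) (ν : Measure ℝ) (r : ℝ) : ℝ :=
  σ ^ 2 / r ^ 2 + (∫ s in Ioo (0:ℝ) r, s ^ 2 ∂ν) / r ^ 2

/-- The Pruitt function `h(r) = σ²/r² + ∫_{(0,∞)} min(1, s²/r²) ν(ds)`. -/
def pruittH (σ : ℝ) (ν : Measure ℝ) (r : ℝ) : ℝ :=
  σ ^ 2 / r ^ 2 + ∫ s in Ioi (0:ℝ), min 1 (s ^ 2 / r ^ 2) ∂ν

/-- The real part of the characteristic exponent:
`Re ψ(ξ) = σ²ξ² + ∫_{(0,∞)} (1 − cos(ξx)) ν(dx)`. -/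
def rePsi (σ : ℝ) (ν : Measure ℝ) (ξ : ℝ) : ℝ :=
  σ ^ 2 * ξ ^ 2 + ∫ x in Ioi (0:ℝ), (1 - Real.cos (ξ * x)) ∂ν

/-- `ψ*(r) = sup_{|z| ≤ r} Re ψ(z)`. -/
def psiStar (σ : ℝ) (ν : Measure ℝ) (r : ℝ) : ℝ :=
  sSup (rePsi σ ν '' {z : ℝ | |z| ≤ r})

/-- `ψ⁻¹(s) = sup{r > 0 : ψ*(r) = s}`. -/
def psiInv (σ : ℝ) (ν : Measure ℝ) (s : ℝ) : ℝ :=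
  sSup {r : ℝ | 0 < r ∧ psiStar σ ν r = s}

/-- `Φ(x) = x² φ''(x)`. -/
def bigPhi (φ'' : ℝ → ℝ) (x : ℝ) : ℝ := x ^ 2 * φ'' x

/-- `Φ*(r) = sup_{0 < s ≤ r} Φ(s)`. -/
def bigPhiStar (φ'' : ℝ → ℝ) (r : ℝ) : ℝ := sSup (bigPhi φ'' '' Ioc (0:ℝ) r)

/-- `Φ⁻¹(s) = sup{r > 0 : Φ*(r) = s}`. -/
def bigPhiInv (φ'' : ℝ → ℝ) (s : ℝ) : ℝ := sSup {r : ℝ | 0 < r ∧ bigPhiStar φ'' r = s}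

/-- The characteristic (Lévy–Khintchine) exponent
`ψ(ξ) = σ²ξ² − ibξ − ∫_{(0,∞)} (e^{iξx} − 1 − iξx 1_{x<1}) ν(dx)`. -/
def charExp (σ b : ℝ) (ν : Measure ℝ) (ξ : ℝ) : ℂ :=
  (σ : ℂ) ^ 2 * (ξ : ℂ) ^ 2 - Complex.I * (b : ℂ) * (ξ : ℂ) -
    ∫ x in Ioi (0:ℝ), (Complex.exp (Complex.I * (ξ : ℂ) * (x : ℂ)) - 1 -
      Complex.I * (ξ : ℂ) * (x : ℂ) * (if x < 1 then (1:ℂ) else 0)) ∂ν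

/-- The holomorphic extension of the Laplace exponent to `{Re z > 0}`. -/
def laplaceC (σ b : ℝ) (ν : Measure ℝ) (z : ℂ) : ℂ :=
  (σ : ℂ) ^ 2 * z ^ 2 - (b : ℂ) * z +
    ∫ x in Ioi (0:ℝ), (Complex.exp (-(z * (x : ℂ))) - 1 +
      z * (x : ℂ) * (if x < 1 then (1:ℂ) else 0)) ∂ν

/-- `b_r = b + ∫_{(0,∞)} s (1_{s<r} − 1_{s<1}) ν(ds)`. -/
def brFn (b : ℝ) (ν : Measure ℝ) (r : ℝ) : ℝ :=
  b + ∫ s in Ioi (0:ℝ), s * ((if s < r then (1:ℝ) else 0) - (if s < 1 then (1:ℝ) else 0)) ∂ν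

/-- The majorant `η`: `η(0) = ∞`, `η(s) = s⁻¹ Φ*(1/s)` for `0 < s < 1/x₀`,
and `η(s) = A s⁻¹ |φ(1/s)|` for `s ≥ 1/x₀`, where `A = Φ*(x₀)/|φ(x₀)|`. -/
def etaFn (φ φ'' : ℝ → ℝ) (x₀ : ℝ) (s : ℝ) : ENNReal :=
  if s ≤ 0 then ⊤
  else if x₀ * s < 1 then ENNReal.ofReal (s⁻¹ * bigPhiStar φ'' s⁻¹)
  else ENNReal.ofReal ((bigPhiStar φ'' x₀ / |φ x₀|) * s⁻¹ * |φ s⁻¹|)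

open Topology

lemma sq_mul_exp_neg_le_two {t : ℝ} (ht : 0 ≤ t) : t ^ 2 * exp (-t) ≤ 2 := by
  have h := pow_div_factorial_le_exp t ht 2
  rw [exp_neg, ← div_eq_mul_inv, div_le_iff₀ (exp_pos t)]
  norm_num [Nat.factorial] at h
  linarith

lemma sq_mul_exp_neg_le_two_mul_min {t : ℝ} (ht : 0 ≤ t) :
    t ^ 2 * exp (-t) ≤ 2 * min 1 (t ^ 2) := by
  rcases le_total 1 (t ^ 2) with h | h
  · rw [min_eq_left h, mul_one]; exact sq_mul_exp_neg_le_two ht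
  · rw [min_eq_right h]
    have : exp (-t) ≤ 1 := exp_le_one_iff.2 (by linarith)
    nlinarith [sq_nonneg t]

lemma one_sub_cos_le_two_mul_min (t : ℝ) : 1 - cos t ≤ 2 * min 1 (t ^ 2) := by
  have h1 := one_sub_sq_div_two_le_cos (x := t)
  have h2 := neg_one_le_cos t
  rcases le_total 1 (t ^ 2) with h | h
  · rw [min_eq_left h]; linarith
  · rw [min_eq_right h]; linarith [sq_nonneg t]

lemma mul_min_one_sq_div_le_sub_sin {t : ℝ} (ht : 0 ≤ t) :
    t * min 1 (t ^ 2) / 20 ≤ t - sin t := by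
  rcases le_total t 1 with h1 | h1
  · have hb := (abs_le.1 (sin_bound (x := t) (by rwa [abs_of_nonneg ht]))).2
    rw [abs_of_nonneg ht] at hb
    have h5 : t ^ 5 ≤ t ^ 3 := pow_le_pow_of_le_one ht h1 (by norm_num)
    rw [min_eq_right (by nlinarith)]
    nlinarith
  · have hsin1 : sin 1 ≤ 1 - 1 / 6 + 1 / 100 := by
      have := (abs_le.1 (sin_bound (x := 1) (by norm_num))).2
      norm_num at this ⊢; linarith
    have hlip := (abs_le.1 (abs_sin_sub_sin_le t 1)).2
    rw [abs_of_nonneg (by linarith)] at hlip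
    rw [min_eq_left (by nlinarith)]
    rcases le_total t (20 / 19) with h2 | h2
    · linarith
    · linarith [sin_le_one t]

lemma min_one_mul_sq_le (r s : ℝ) : min 1 ((r * s) ^ 2) ≤ max 1 (r ^ 2) * min 1 (s ^ 2) := by
  rw [mul_pow]
  rcases le_total (s ^ 2) 1 with h | h
  · rw [min_eq_right h]
    exact (min_le_right _ _).trans (mul_le_mul_of_nonneg_right (le_max_right _ _) (sq_nonneg s))
  · rw [min_eq_left h, mul_one]
    exact (min_le_left _ _).trans (le_max_left _ _)

section LevyMeasure

variable {ν : Measure ℝ}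

lemma integrableOn_min_one_sq
    (hint : ∫⁻ x in Ioi (0:ℝ), ENNReal.ofReal (min 1 (x ^ 2)) ∂ν ≠ ⊤) :
    IntegrableOn (fun s => min 1 (s ^ 2)) (Ioi 0) ν :=
  ⟨(by fun_prop : Continuous fun s : ℝ => min 1 (s ^ 2)).aestronglyMeasurable,
    (hasFiniteIntegral_iff_ofReal (Eventually.of_forall fun _ => by positivity)).2 hint.lt_top⟩

lemma integrableOn_of_abs_le_mul_min (hν : IntegrableOn (fun s => min 1 (s ^ 2)) (Ioi 0) ν)
    {f : ℝ → ℝ} (hf : Continuous f) (C : ℝ) (hle : ∀ s > 0, |f s| ≤ C * min 1 (s ^ 2)) :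
    IntegrableOn f (Ioi 0) ν :=
  (hν.const_mul C).mono' hf.aestronglyMeasurable
    ((ae_restrict_iff' measurableSet_Ioi).2 (Eventually.of_forall hle))

lemma integrableOn_min_one_mul_sq (hν : IntegrableOn (fun s => min 1 (s ^ 2)) (Ioi 0) ν)
    (r : ℝ) : IntegrableOn (fun s => min 1 ((r * s) ^ 2)) (Ioi 0) ν :=
  integrableOn_of_abs_le_mul_min hν (by fun_prop) _ fun s _ => by
    rw [abs_of_nonneg (by positivity)]; exact min_one_mul_sq_le r s

lemma integrableOn_one_sub_cos (hν : IntegrableOn (fun s => min 1 (s ^ 2)) (Ioi 0) ν)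
    (ξ : ℝ) : IntegrableOn (fun s => 1 - cos (ξ * s)) (Ioi 0) ν :=
  integrableOn_of_abs_le_mul_min hν (by fun_prop) (2 * max 1 (ξ ^ 2)) fun s _ => by
    rw [abs_of_nonneg (by linarith [cos_le_one (ξ * s)]), mul_assoc]
    exact (one_sub_cos_le_two_mul_min _).trans (by gcongr; exact min_one_mul_sq_le ξ s)

lemma integrableOn_sq_mul_exp (hν : IntegrableOn (fun s => min 1 (s ^ 2)) (Ioi 0) ν)
    {x : ℝ} (hx : 0 < x) :
    IntegrableOn (fun s => (x * s) ^ 2 * exp (-(x * s))) (Ioi 0) ν :=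
  integrableOn_of_abs_le_mul_min hν (by fun_prop) (2 * max 1 (x ^ 2)) fun s hs => by
    rw [abs_of_nonneg (by positivity), mul_assoc]
    exact (sq_mul_exp_neg_le_two_mul_min (mul_pos hx hs).le).trans
      (mul_le_mul_of_nonneg_left (min_one_mul_sq_le x s) zero_le_two)

lemma measure_Ici_lt_top (hν : IntegrableOn (fun s => min 1 (s ^ 2)) (Ioi 0) ν)
    {a : ℝ} (ha : 0 < a) : ν (Ici a) < ⊤ := by
  refine lt_of_le_of_lt ?_ (Integrable.measure_ge_lt_top hν (ε := min 1 (a ^ 2)) (by positivity))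
  rw [← Measure.restrict_eq_self ν (Ici_subset_Ioi.2 ha)]
  exact measure_mono fun s hs => min_le_min le_rfl (pow_le_pow_left₀ ha.le hs 2)

end LevyMeasure

section RunningSupremum

variable {f g : ℝ → ℝ}

/-- `bigPhiStar φ'' = runSup (bigPhi φ'')`. -/
def runSup (f : ℝ → ℝ) (r : ℝ) : ℝ := sSup (f '' Ioc 0 r)

lemma runSup_congr (h : EqOn f g (Ioi 0)) : runSup f = runSup g :=
  funext fun r => by rw [runSup, runSup, (h.mono Ioc_subset_Ioi_self).image_eq]

lemma bddAbove_image_Ioc_of_le (hg : MonotoneOn g (Ioi 0)) (hfg : ∀ x, 0 < x → f x ≤ g x)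
    (r : ℝ) : BddAbove (f '' Ioc 0 r) :=
  ⟨g r, forall_mem_image.2 fun y hy =>
    (hfg y hy.1).trans (hg hy.1 (hy.1.trans_le hy.2) hy.2)⟩

lemma le_runSup (hb : ∀ r, BddAbove (f '' Ioc 0 r)) {y r : ℝ} (hy : y ∈ Ioc 0 r) :
    f y ≤ runSup f r :=
  le_csSup (hb r) (mem_image_of_mem f hy)

lemma runSup_le {r B : ℝ} (hr : 0 < r) (h : ∀ y ∈ Ioc 0 r, f y ≤ B) : runSup f r ≤ B :=
  csSup_le ((nonempty_Ioc.2 hr).image f) (forall_mem_image.2 h)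

lemma runSup_le_of_le (hg : MonotoneOn g (Ioi 0)) (hfg : ∀ x, 0 < x → f x ≤ g x) {r : ℝ}
    (hr : 0 < r) : runSup f r ≤ g r :=
  runSup_le hr fun y hy => (hfg y hy.1).trans (hg hy.1 hr hy.2)

lemma runSup_monotoneOn (hb : ∀ r, BddAbove (f '' Ioc 0 r)) : MonotoneOn (runSup f) (Ioi 0) :=
  fun _ ha b _ hab =>
    csSup_le_csSup (hb b) ((nonempty_Ioc.2 ha).image f) (image_mono (Ioc_subset_Ioc_right hab))

lemma runSup_le_runSup_add (hb : ∀ r, BddAbove (f '' Ioc 0 r)) {a b ε : ℝ} (ha : 0 < a)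
    (hab : a ≤ b) (hε : 0 ≤ ε) (h : ∀ t ∈ Icc a b, f t ≤ f a + ε) :
    runSup f b ≤ runSup f a + ε := by
  have hfa : f a ≤ runSup f a := le_runSup hb ⟨ha, le_rfl⟩
  refine runSup_le (ha.trans_le hab) fun y hy => ?_
  rcases le_total y a with hya | hay
  · linarith [le_runSup hb ⟨hy.1, hya⟩]
  · linarith [h y ⟨hay, hy.2⟩]

lemma runSup_continuousOn (hf : ContinuousOn f (Ioi 0)) (hb : ∀ r, BddAbove (f '' Ioc 0 r)) :
    ContinuousOn (runSup f) (Ioi 0) := by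
  intro x hx
  refine (Metric.continuousAt_iff.2 fun ε hε => ?_).continuousWithinAt
  obtain ⟨δ, hδ, hfδ⟩ := Metric.continuousAt_iff.1 (hf.continuousAt (Ioi_mem_nhds hx)) (ε / 4)
    (by positivity)
  refine ⟨min δ x, lt_min hδ hx, fun y hy => ?_⟩
  rw [Real.dist_eq] at hy ⊢
  have hy0 : 0 < min x y := lt_min hx (by linarith [(abs_lt.1 (hy.trans_le (min_le_right δ x))).1])
  have hclose : ∀ t ∈ uIcc x y, |f t - f x| < ε / 4 := fun t ht => by
    refine Real.dist_eq _ _ ▸ hfδ ?_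
    rw [Real.dist_eq]
    have := abs_sub_left_of_mem_uIcc ht
    linarith [min_le_left δ x]
  have hosc := runSup_le_runSup_add hb hy0 min_le_max (by positivity : (0:ℝ) ≤ ε / 2)
    fun t ht => by
      have h1 := hclose t ht
      have h2 := hclose _ ⟨le_rfl, min_le_max⟩
      rw [abs_lt] at h1 h2
      linarith
  have hmono := runSup_monotoneOn hb
  have hxa := hmono hy0 hx (min_le_left x y)
  have hya := hmono hy0 (hy0.trans_le (min_le_right x y)) (min_le_right x y)
  have hxb := hmono hx (hx.trans_le (le_max_left x y)) (le_max_left x y)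
  have hyb := hmono (hy0.trans_le (min_le_right x y)) (hx.trans_le (le_max_left x y))
    (le_max_right x y)
  rw [abs_lt]
  constructor <;> linarith

end RunningSupremum

section GeneralizedInverse

variable {F G : ℝ → ℝ}

/-- `bigPhiInv φ'' = genInv (bigPhiStar φ'')` and `psiInv σ ν = genInv (psiStar σ ν)`. -/
def genInv (F : ℝ → ℝ) (s : ℝ) : ℝ := sSup {r | 0 < r ∧ F r = s}

lemma genInv_congr (h : EqOn F G (Ioi 0)) : genInv F = genInv G :=
  funext fun _ => congrArg sSup (Set.ext fun _ => and_congr_right fun hr => by rw [h hr])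

lemma genInv_pos_and_apply (hcont : ContinuousOn F (Ioi 0)) (hmono : MonotoneOn F (Ioi 0))
    {a b s : ℝ} (ha : 0 < a) (hFa : F a ≤ s) (hb : 0 < b) (hFb : s < F b) :
    0 < genInv F s ∧ F (genInv F s) = s := by
  set S := {r | 0 < r ∧ F r = s}
  have hab : a ≤ b := (hmono.reflect_lt ha hb (hFa.trans_lt hFb)).le
  obtain ⟨t, ht, hFt⟩ := intermediate_value_Icc hab (hcont.mono fun t ht => ha.trans_le ht.1)
    ⟨hFa, hFb.le⟩
  have htS : t ∈ S := ⟨ha.trans_le ht.1, hFt⟩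
  have hbdd : BddAbove S := ⟨b, fun r hr => (hmono.reflect_lt hr.1 hb (hr.2 ▸ hFb)).le⟩
  have hpos : 0 < sSup S := htS.1.trans_le (le_csSup hbdd htS)
  refine ⟨hpos, show F (sSup S) = s from ?_⟩
  have hcl := ((hcont.continuousAt (Ioi_mem_nhds hpos)).continuousWithinAt (s := S)
    ).mem_closure_image (csSup_mem_closure ⟨t, htS⟩ hbdd)
  have hsub : F '' S ⊆ {s} := forall_mem_image.2 fun r hr => hr.2
  simpa using closure_mono hsub hcl

structure IsGrowthProfile (F : ℝ → ℝ) : Prop where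
  continuousOn : ContinuousOn F (Ioi 0)
  monotoneOn : MonotoneOn F (Ioi 0)
  pos : ∀ x, 0 < x → 0 < F x
  exists_lt : ∀ s, 0 < s → ∃ x, 0 < x ∧ F x < s
  exists_gt : ∀ s, ∃ x, 0 < x ∧ s < F x

lemma isGrowthProfile_runSup {f g : ℝ → ℝ} (hf : ContinuousOn f (Ioi 0))
    (hg : MonotoneOn g (Ioi 0)) (hg0 : Tendsto g (𝓝 0) (𝓝 0)) (hfg : ∀ x, 0 < x → f x ≤ g x)
    (hpos : ∀ x, 0 < x → 0 < runSup f x) (htop : ∀ s, ∃ x, 0 < x ∧ s < runSup f x) :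
    IsGrowthProfile (runSup f) where
  continuousOn := runSup_continuousOn hf (bddAbove_image_Ioc_of_le hg hfg)
  monotoneOn := runSup_monotoneOn (bddAbove_image_Ioc_of_le hg hfg)
  pos := hpos
  exists_lt s hs := by
    obtain ⟨x, hgx, hx⟩ := (((hg0.mono_left nhdsWithin_le_nhds).eventually (gt_mem_nhds hs)).and
      (self_mem_nhdsWithin (s := Ioi 0))).exists
    exact ⟨x, hx, (runSup_le_of_le hg hfg hx).trans_lt hgx⟩
  exists_gt := htop

namespace IsGrowthProfile

lemma genInv_pos (hF : IsGrowthProfile F) {s : ℝ} (hs : 0 < s) : 0 < genInv F s := by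
  obtain ⟨a, ha, hFa⟩ := hF.exists_lt s hs
  obtain ⟨b, hb, hFb⟩ := hF.exists_gt s
  exact (genInv_pos_and_apply hF.continuousOn hF.monotoneOn ha hFa.le hb hFb).1

lemma apply_genInv (hF : IsGrowthProfile F) {s : ℝ} (hs : 0 < s) : F (genInv F s) = s := by
  obtain ⟨a, ha, hFa⟩ := hF.exists_lt s hs
  obtain ⟨b, hb, hFb⟩ := hF.exists_gt s
  exact (genInv_pos_and_apply hF.continuousOn hF.monotoneOn ha hFa.le hb hFb).2

lemma exists_lt_or_lt_genInv (hF : IsGrowthProfile F) {x₁ r₀ : ℝ} (hr₀ : 0 ≤ r₀)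
    (hx₁ : x₁ = 0 ∨ 0 < r₀) :
    ∃ δ, 0 < δ ∧ ∀ r, r₀ < r → x₁ < genInv F r ∨ δ < genInv F r := by
  rcases hx₁ with rfl | hr₀
  · exact ⟨1, one_pos, fun r hr => Or.inl (hF.genInv_pos (hr₀.trans_lt hr))⟩
  obtain ⟨δ, hδ, hFδ⟩ := hF.exists_lt r₀ hr₀
  refine ⟨δ, hδ, fun r hr => Or.inr ?_⟩
  have hr : 0 < r := hr₀.trans hr
  exact hF.monotoneOn.reflect_lt hδ (hF.genInv_pos hr)
    (by rw [hF.apply_genInv hr]; linarith)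

end IsGrowthProfile

end GeneralizedInverse

section Scaling

variable {f : ℝ → ℝ} {α c x₀ x₁ : ℝ}

lemma WLSC.bigPhi_of_sub_two {φ'' : ℝ → ℝ} (h : WLSC φ'' (α - 2) c x₀) :
    WLSC (bigPhi φ'') α c x₀ := by
  intro l hl x hx
  have hpow : l ^ α = l ^ 2 * l ^ (α - 2) := by
    rw [← rpow_natCast, ← rpow_add (one_pos.trans_le hl)]; norm_num
  calc c * l ^ α * bigPhi φ'' x = (l * x) ^ 2 * (c * l ^ (α - 2) * φ'' x) := by
        rw [bigPhi, hpow]; ring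
    _ ≤ (l * x) ^ 2 * φ'' (l * x) := mul_le_mul_of_nonneg_left (h l hl x hx) (sq_nonneg _)

lemma WLSC.congr {g : ℝ → ℝ} (h : WLSC f α c x₀) (hfg : EqOn f g (Ioi 0)) (hx₀ : 0 ≤ x₀) :
    WLSC g α c x₀ := by
  intro l hl x hx
  have hx0 : 0 < x := hx₀.trans_lt hx
  rw [← hfg hx0, ← hfg (mul_pos (one_pos.trans_le hl) hx0)]
  exact h l hl x hx

lemma WLSC.exists_lt_apply (h : WLSC f α c x₀) (hα : 0 < α) (hc : 0 < c) {y : ℝ}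
    (hy : x₀ < y) (hy0 : 0 ≤ y) (hfy : 0 < f y) (s : ℝ) : ∃ z, y ≤ z ∧ s < f z := by
  have hlim : Tendsto (fun l : ℝ => c * f y * l ^ α) atTop atTop :=
    (tendsto_rpow_atTop hα).const_mul_atTop (by positivity)
  obtain ⟨l, hl, hls⟩ := ((eventually_ge_atTop 1).and (hlim.eventually_gt_atTop s)).exists
  refine ⟨l * y, le_mul_of_one_le_left hy0 hl, hls.trans_le ?_⟩
  simpa only [mul_right_comm] using h l hl y hy

lemma WLSC.runSup_of_forall_le (h : WLSC f α c x₀) (hb : ∀ r, BddAbove (f '' Ioc 0 r))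
    (hc : 0 < c) (hx₀ : 0 ≤ x₀) {w : ℝ} (hw₀ : x₀ ≤ w)
    (hw : ∀ y ∈ Ioc 0 x₀, ∃ z ∈ Ioc x₀ w, f y ≤ f z) :
    WLSC (runSup f) α c w := by
  intro l hl x hx
  have hl0 : 0 < l := one_pos.trans_le hl
  have hx0 : 0 < x := (hx₀.trans hw₀).trans_lt hx
  have hcl : 0 < c * l ^ α := by positivity
  have key : ∀ z ∈ Ioc x₀ x, c * l ^ α * f z ≤ runSup f (l * x) := fun z hz =>
    (h l hl z hz.1).trans (le_runSup hb
      ⟨mul_pos hl0 (hx₀.trans_lt hz.1), mul_le_mul_of_nonneg_left hz.2 hl0.le⟩)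
  rw [← le_div_iff₀' hcl]
  refine runSup_le hx0 fun y hy => (le_div_iff₀' hcl).2 ?_
  rcases le_or_gt y x₀ with hyx₀ | hyx₀
  · obtain ⟨z, hz, hfz⟩ := hw y ⟨hy.1, hyx₀⟩
    exact (mul_le_mul_of_nonneg_left hfz hcl.le).trans (key z ⟨hz.1, hz.2.trans hx.le⟩)
  · exact key y ⟨hyx₀, hy.2⟩

lemma WLSC.exists_runSup (h : WLSC f α c x₀) (hb : ∀ r, BddAbove (f '' Ioc 0 r)) (hα : 0 < α)
    (hc : 0 < c) (hx₀ : 0 ≤ x₀) (hpos : ∀ x, 0 < x → 0 < f x) :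
    ∃ x₁, x₀ ≤ x₁ ∧ (x₁ = 0 ∨ 0 < f x₀) ∧ WLSC (runSup f) α c x₁ := by
  rcases hx₀.eq_or_lt with rfl | hx₀
  · exact ⟨0, le_rfl, Or.inl rfl,
      h.runSup_of_forall_le hb hc le_rfl le_rfl fun y hy => absurd hy.2 (not_le.2 hy.1)⟩
  -- `f z` dominates `f` on `(0, x₀]`, so `z` serves as the threshold for `runSup f`
  obtain ⟨z, hz, hfz⟩ := h.exists_lt_apply hα hc (lt_add_one x₀) (by linarith)
    (hpos _ (by linarith)) (runSup f x₀)
  exact ⟨z, by linarith, Or.inr (hpos x₀ hx₀), h.runSup_of_forall_le hb hc hx₀.le (by linarith)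
    fun y hy => ⟨z, ⟨by linarith, le_rfl⟩, (le_runSup hb hy).trans hfz.le⟩⟩

lemma WLSC.apply_div_two_pow_le (h : WLSC f α c x₀) (hc : 0 < c) {x : ℝ} {k : ℕ}
    (hk : x₀ < x / 2 ^ k) : f (x / 2 ^ k) ≤ c⁻¹ * ((2:ℝ) ^ (-α)) ^ k * f x := by
  have hs := h (2 ^ k) (one_le_pow₀ one_le_two) (x / 2 ^ k) hk
  rw [mul_div_cancel₀ x (by positivity)] at hs
  have h2k : ((2:ℝ) ^ (-α)) ^ k * ((2:ℝ) ^ k) ^ α = 1 := by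
    rw [← rpow_natCast, ← rpow_natCast, ← rpow_mul zero_le_two, ← rpow_mul zero_le_two,
      ← rpow_add two_pos]
    ring_nf
    exact rpow_zero 2
  calc f (x / 2 ^ k) = c⁻¹ * c * (((2:ℝ) ^ (-α)) ^ k * ((2:ℝ) ^ k) ^ α) * f (x / 2 ^ k) := by
        rw [inv_mul_cancel₀ hc.ne', h2k, one_mul, one_mul]
    _ = c⁻¹ * ((2:ℝ) ^ (-α)) ^ k * (c * ((2:ℝ) ^ k) ^ α * f (x / 2 ^ k)) := by ring
    _ ≤ c⁻¹ * ((2:ℝ) ^ (-α)) ^ k * f x := mul_le_mul_of_nonneg_left hs (by positivity)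

lemma WLSC.le_rpow_mul (h : WLSC f α c x₁) (hc : 0 < c) (hα : 0 < α) {K p t : ℝ}
    (hp : x₁ < p) (hp0 : 0 < p) (hfp : 0 < f p) (hcK : c ≤ K) (ht : f t ≤ K * f p) :
    t ≤ (K / c) ^ (1 / α) * p := by
  have hKc : 1 ≤ K / c := (one_le_div hc).2 hcK
  rcases le_total t p with htp | hpt
  · exact htp.trans (le_mul_of_one_le_left hp0.le (one_le_rpow hKc (by positivity)))
  have hm : 1 ≤ t / p := (one_le_div hp0).2 hpt
  have hscal := h (t / p) hm p hp
  rw [div_mul_cancel₀ t hp0.ne'] at hscal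
  have hmα : (t / p) ^ α ≤ K / c := by
    rw [le_div_iff₀' hc]
    exact le_of_mul_le_mul_right (by linarith) hfp
  rw [← div_le_iff₀ hp0, one_div]
  exact (le_rpow_inv_iff_of_pos (by positivity) (by positivity) hα).2 hmα

lemma WLSC.le_mul_of_forall_le_mul (h : WLSC f α c x₁) (hpos : ∀ x, 0 < x → 0 < f x)
    (hc : 0 < c) (hα : 0 < α) (hx₁ : 0 ≤ x₁) {K δ p t : ℝ} (hcK : c ≤ K) (hδ : 0 < δ)
    (hp : x₁ < p ∨ δ < p) (ht : ∀ y, p ≤ y → x₁ < y → f t ≤ K * f y) :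
    t ≤ (K / c) ^ (1 / α) * (max 1 ((x₁ + 1) / δ) * p) := by
  have hp0 : 0 < p := hp.elim (hx₁.trans_lt ·) (hδ.trans ·)
  obtain ⟨y, hpy, hy, hyp⟩ : ∃ y, p ≤ y ∧ x₁ < y ∧ y ≤ max 1 ((x₁ + 1) / δ) * p := by
    by_cases hx₁p : x₁ < p
    · exact ⟨p, le_rfl, hx₁p, le_mul_of_one_le_left hp0.le (le_max_left _ _)⟩
    refine ⟨x₁ + 1, by linarith, by linarith, ?_⟩
    calc x₁ + 1 = (x₁ + 1) / δ * δ := (div_mul_cancel₀ _ hδ.ne').symm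
      _ ≤ max 1 ((x₁ + 1) / δ) * p :=
        mul_le_mul (le_max_right _ _) (hp.resolve_left hx₁p).le hδ.le (by positivity)
  have hy0 : 0 < y := hp0.trans_le hpy
  exact (h.le_rpow_mul hc hα hy hy0 (hpos y hy0) hcK (ht y hpy hy)).trans
    (mul_le_mul_of_nonneg_left hyp (rpow_nonneg (div_nonneg (hc.le.trans hcK) hc.le) _))

end Scaling

section InverseComparison

variable {F G : ℝ → ℝ} {α c x₁ r₀ : ℝ}

theorem genInv_comparable (hF : IsGrowthProfile F) (hG : IsGrowthProfile G)
    (hscal : WLSC F α c x₁) (hc : c ∈ Ioc 0 1) (hα : 0 < α) (hx₁ : 0 ≤ x₁) {A B : ℝ}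
    (hA : 1 ≤ A) (hB : 1 ≤ B) (hFG : ∀ x, 0 < x → F x ≤ A * G x)
    (hGF : ∀ x, x₁ < x → G x ≤ B * F x) (hr₀ : 0 ≤ r₀) (hx₁r₀ : x₁ = 0 ∨ 0 < r₀) :
    ∃ C, 1 ≤ C ∧ ∀ r, r₀ < r →
      C⁻¹ * genInv F r ≤ genInv G r ∧ genInv G r ≤ C * genInv F r := by
  obtain ⟨δF, hδF, hlowF⟩ := hF.exists_lt_or_lt_genInv hr₀ hx₁r₀
  obtain ⟨δG, hδG, hlowG⟩ := hG.exists_lt_or_lt_genInv hr₀ hx₁r₀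
  have hcA : c ≤ A := hc.2.trans hA
  have hcB : c ≤ B := hc.2.trans hB
  set CF := (B / c) ^ (1 / α) * max 1 ((x₁ + 1) / δG)
  set CG := (A / c) ^ (1 / α) * max 1 ((x₁ + 1) / δF)
  have hCF : 1 ≤ CF := one_le_mul_of_one_le_of_one_le
    (one_le_rpow ((one_le_div hc.1).2 hcB) (by positivity)) (le_max_left _ _)
  refine ⟨max CF CG, le_max_of_le_left hCF, fun r hr => ?_⟩
  have hr0 : 0 < r := hr₀.trans_lt hr
  have hFv := hF.apply_genInv hr0
  have hGu := hG.apply_genInv hr0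
  have hv : genInv F r ≤ CF * genInv G r := by
    rw [mul_assoc]
    refine hscal.le_mul_of_forall_le_mul hF.pos hc.1 hα hx₁ hcB hδG (hlowG r hr)
      fun y hy hx₁y => ?_
    have hy0 := (hG.genInv_pos hr0).trans_le hy
    calc F (genInv F r) = G (genInv G r) := hFv.trans hGu.symm
      _ ≤ G y := hG.monotoneOn (hG.genInv_pos hr0) hy0 hy
      _ ≤ B * F y := hGF y hx₁y
  have hu : genInv G r ≤ CG * genInv F r := by
    rw [mul_assoc]
    refine hscal.le_mul_of_forall_le_mul hF.pos hc.1 hα hx₁ hcA hδF (hlowF r hr)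
      fun y hy _ => ?_
    have hy0 := (hF.genInv_pos hr0).trans_le hy
    calc F (genInv G r) ≤ A * G (genInv G r) := hFG _ (hG.genInv_pos hr0)
      _ = A * F (genInv F r) := by rw [hGu, hFv]
      _ ≤ A * F y := mul_le_mul_of_nonneg_left (hF.monotoneOn (hF.genInv_pos hr0) hy0 hy)
        (by linarith)
  have hpos : 0 < max CF CG := zero_lt_one.trans_le (le_max_of_le_left hCF)
  rw [inv_mul_le_iff₀ hpos]
  exact ⟨hv.trans (by gcongr; exacts [(hG.genInv_pos hr0).le, le_max_left _ _]),
    hu.trans (by gcongr; exacts [(hF.genInv_pos hr0).le, le_max_right _ _])⟩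

theorem genInv_mul_le (hF : IsGrowthProfile F) (hscal : WLSC F α c x₁) (hc : c ∈ Ioc 0 1)
    (hα : 0 < α) (hx₁ : 0 ≤ x₁) (hr₀ : 0 ≤ r₀) (hx₁r₀ : x₁ = 0 ∨ 0 < r₀) :
    ∃ C, 1 ≤ C ∧ ∀ l, 1 ≤ l → ∀ r, r₀ < r →
      genInv F (l * r) ≤ C * l ^ (1 / α) * genInv F r := by
  obtain ⟨δ, hδ, hlow⟩ := hF.exists_lt_or_lt_genInv hr₀ hx₁r₀
  refine ⟨(1 / c) ^ (1 / α) * max 1 ((x₁ + 1) / δ), one_le_mul_of_one_le_of_one_le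
    (one_le_rpow ((one_le_div hc.1).2 hc.2) (by positivity)) (le_max_left _ _),
    fun l hl r hr => ?_⟩
  have hr0 : 0 < r := hr₀.trans_lt hr
  have hv0 := hF.genInv_pos hr0
  have hw := hscal.le_mul_of_forall_le_mul hF.pos hc.1 hα hx₁ (hc.2.trans hl) hδ (hlow r hr)
    (t := genInv F (l * r)) fun y hy _ => by
      rw [hF.apply_genInv (mul_pos (by linarith) hr0), ← hF.apply_genInv hr0]
      exact mul_le_mul_of_nonneg_left (hF.monotoneOn hv0 (hv0.trans_le hy) hy) (by linarith)
  rw [div_eq_mul_one_div l c, mul_rpow (by linarith) (one_div_pos.2 hc.1).le] at hw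
  calc _ ≤ _ := hw
    _ = _ := by ring

end InverseComparison

section LevyExponents

variable {ν : Measure ℝ} {σ : ℝ}

/-- `levyG σ ν r = pruittH σ ν r⁻¹`. -/
def levyG (σ : ℝ) (ν : Measure ℝ) (r : ℝ) : ℝ :=
  σ ^ 2 * r ^ 2 + ∫ s in Ioi 0, min 1 ((r * s) ^ 2) ∂ν

/-- `levyPhi σ ν x = x ^ 2 * φ'' x = bigPhi φ'' x` for `x ≥ 0`. -/
def levyPhi (σ : ℝ) (ν : Measure ℝ) (x : ℝ) : ℝ :=
  2 * σ ^ 2 * x ^ 2 + ∫ s in Ioi 0, (x * s) ^ 2 * exp (-(x * s)) ∂ν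

lemma bigPhi_eq_levyPhi {φ'' : ℝ → ℝ}
    (hφ'' : ∀ l : ℝ, 0 < l → φ'' l = 2 * σ ^ 2 + ∫ x in Ioi (0:ℝ), x ^ 2 * exp (-(l * x)) ∂ν)
    {x : ℝ} (hx : 0 ≤ x) : bigPhi φ'' x = levyPhi σ ν x := by
  rcases hx.eq_or_lt with rfl | hx
  · simp [bigPhi, levyPhi]
  rw [bigPhi, levyPhi, hφ'' x hx, mul_add, ← integral_const_mul]
  congr 1
  · ring
  · congr 1 with s
    ring

lemma levyG_monotoneOn (hν : IntegrableOn (fun s => min 1 (s ^ 2)) (Ioi 0) ν) :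
    MonotoneOn (levyG σ ν) (Ioi 0) := fun a ha _ _ hab => by
  have hab2 : a ^ 2 ≤ _ := pow_le_pow_left₀ (le_of_lt ha) hab 2
  refine add_le_add (mul_le_mul_of_nonneg_left hab2 (sq_nonneg σ)) (integral_mono
    (integrableOn_min_one_mul_sq hν _) (integrableOn_min_one_mul_sq hν _) fun s => ?_)
  simp only [mul_pow]
  exact min_le_min le_rfl (mul_le_mul_of_nonneg_right hab2 (sq_nonneg s))

lemma tendsto_levyG_zero (hν : IntegrableOn (fun s => min 1 (s ^ 2)) (Ioi 0) ν) :
    Tendsto (levyG σ ν) (𝓝 0) (𝓝 0) := by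
  have h : ContinuousAt (fun r => ∫ s in Ioi 0, min 1 ((r * s) ^ 2) ∂ν) 0 := by
    refine continuousAt_of_dominated (bound := fun s => min 1 (s ^ 2))
      (Eventually.of_forall fun _ => (by fun_prop : Continuous _).aestronglyMeasurable) ?_ hν
      (Eventually.of_forall fun s => by fun_prop)
    filter_upwards [Icc_mem_nhds neg_one_lt_zero one_pos] with r hr
    filter_upwards with s
    rw [Real.norm_eq_abs, abs_of_nonneg (by positivity), mul_pow]
    exact min_le_min le_rfl (mul_le_of_le_one_left (sq_nonneg s) (by nlinarith [hr.1, hr.2]))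
  have hG : ContinuousAt (levyG σ ν) 0 :=
    (by fun_prop : Continuous fun r : ℝ => σ ^ 2 * r ^ 2).continuousAt.add h
  have hG0 : levyG σ ν 0 = 0 := by simp [levyG]
  simpa [hG0] using hG.tendsto

lemma levyPhi_nonneg (x : ℝ) : 0 ≤ levyPhi σ ν x :=
  add_nonneg (by positivity) (setIntegral_nonneg measurableSet_Ioi fun _ _ => by positivity)

lemma levyPhi_pos (hν : IntegrableOn (fun s => min 1 (s ^ 2)) (Ioi 0) ν)
    (hUV : 0 < σ ∨ ∫⁻ x in Ioo (0:ℝ) 1, ENNReal.ofReal x ∂ν = ⊤) {x : ℝ} (hx : 0 < x) :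
    0 < levyPhi σ ν x := by
  have hI : 0 ≤ ∫ s in Ioi 0, (x * s) ^ 2 * exp (-(x * s)) ∂ν :=
    setIntegral_nonneg measurableSet_Ioi fun _ _ => by positivity
  rcases hUV with hσ | hν₀
  · exact add_pos_of_pos_of_nonneg (by positivity) hI
  have hIoo : ν (Ioo 0 1) ≠ 0 := fun h0 => by simp [setLIntegral_measure_zero _ _ h0] at hν₀
  refine add_pos_of_nonneg_of_pos (by positivity) ?_
  rw [setIntegral_pos_iff_support_of_nonneg_ae (Eventually.of_forall fun _ => by positivity)
    (integrableOn_sq_mul_exp hν hx)]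
  refine (pos_iff_ne_zero.2 hIoo).trans_le (measure_mono fun s hs => ⟨?_, hs.1⟩)
  have := hs.1
  simp only [Function.mem_support]
  positivity

lemma levyPhi_le_two_levyG (hν : IntegrableOn (fun s => min 1 (s ^ 2)) (Ioi 0) ν) {x : ℝ}
    (hx : 0 < x) : levyPhi σ ν x ≤ 2 * levyG σ ν x := by
  have hI : ∫ s in Ioi 0, (x * s) ^ 2 * exp (-(x * s)) ∂ν
      ≤ ∫ s in Ioi 0, 2 * min 1 ((x * s) ^ 2) ∂ν :=
    setIntegral_mono_on (integrableOn_sq_mul_exp hν hx)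
      ((integrableOn_min_one_mul_sq hν x).const_mul 2) measurableSet_Ioi
      fun s hs => sq_mul_exp_neg_le_two_mul_min (mul_pos hx hs).le
  rw [integral_const_mul] at hI
  rw [levyPhi, levyG]
  linarith

lemma levyPhi_continuousOn (hν : IntegrableOn (fun s => min 1 (s ^ 2)) (Ioi 0) ν) :
    ContinuousOn (levyPhi σ ν) (Ioi 0) := by
  intro x₀ hx₀
  have hx₀' : (0:ℝ) < x₀ := hx₀
  refine ((by fun_prop : Continuous fun x : ℝ => 2 * σ ^ 2 * x ^ 2).continuousAt.add ?_
    ).continuousWithinAt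
  refine continuousAt_of_dominated
    (bound := fun s => 16 * ((x₀ / 2 * s) ^ 2 * exp (-(x₀ / 2 * s))))
    (Eventually.of_forall fun _ => (by fun_prop : Continuous _).aestronglyMeasurable) ?_
    ((integrableOn_sq_mul_exp hν (half_pos hx₀')).const_mul 16)
    (Eventually.of_forall fun s => by fun_prop)
  filter_upwards [Ioo_mem_nhds (half_lt_self hx₀') (by linarith : x₀ < 2 * x₀)] with x hx
  rw [ae_restrict_iff' measurableSet_Ioi]
  filter_upwards with s (hs : 0 < s)
  have hx0 : 0 < x := (half_pos hx₀').trans hx.1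
  rw [Real.norm_eq_abs, abs_of_nonneg (by positivity), ← mul_assoc]
  refine mul_le_mul ?_ (exp_le_exp.2 ?_) (by positivity) (by positivity)
  · calc (x * s) ^ 2 ≤ (2 * x₀ * s) ^ 2 :=
        pow_le_pow_left₀ (by positivity) (mul_le_mul_of_nonneg_right hx.2.le hs.le) 2
      _ = 16 * (x₀ / 2 * s) ^ 2 := by ring
  · nlinarith [hx.1]

lemma rePsi_nonneg (ξ : ℝ) : 0 ≤ rePsi σ ν ξ :=
  add_nonneg (by positivity)
    (setIntegral_nonneg measurableSet_Ioi fun s _ => by linarith [cos_le_one (ξ * s)])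

lemma rePsi_zero : rePsi σ ν 0 = 0 := by
  simp [rePsi]

lemma rePsi_abs (ξ : ℝ) : rePsi σ ν |ξ| = rePsi σ ν ξ := by
  rcases abs_choice ξ with h | h <;> rw [h]
  simp only [rePsi, neg_sq, neg_mul, cos_neg]

lemma rePsi_le_two_levyG (hν : IntegrableOn (fun s => min 1 (s ^ 2)) (Ioi 0) ν)
    {ξ r : ℝ} (hξ : |ξ| ≤ r) : rePsi σ ν ξ ≤ 2 * levyG σ ν r := by
  have hξr : ξ ^ 2 ≤ r ^ 2 := sq_le_sq.2 (hξ.trans (le_abs_self r))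
  have hI : ∫ s in Ioi 0, (1 - cos (ξ * s)) ∂ν ≤ ∫ s in Ioi 0, 2 * min 1 ((r * s) ^ 2) ∂ν :=
    integral_mono (integrableOn_one_sub_cos hν ξ)
      ((integrableOn_min_one_mul_sq hν r).const_mul 2) fun s =>
      (one_sub_cos_le_two_mul_min _).trans (by
        simp only [mul_pow]
        gcongr)
  rw [integral_const_mul] at hI
  rw [rePsi, levyG]
  nlinarith [sq_nonneg σ, sq_nonneg r]

lemma rePsi_continuous (hν : IntegrableOn (fun s => min 1 (s ^ 2)) (Ioi 0) ν) :
    Continuous (rePsi σ ν) := by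
  refine (by fun_prop : Continuous fun ξ : ℝ => σ ^ 2 * ξ ^ 2).add
    (continuous_iff_continuousAt.2 fun ξ₀ => ?_)
  refine continuousAt_of_dominated
    (bound := fun s => 2 * (max 1 ((|ξ₀| + 1) ^ 2) * min 1 (s ^ 2)))
    (Eventually.of_forall fun _ => (by fun_prop : Continuous _).aestronglyMeasurable) ?_
    (hν.const_mul _ |>.const_mul 2) (Eventually.of_forall fun s => by fun_prop)
  filter_upwards [Metric.ball_mem_nhds ξ₀ one_pos] with ξ hξ
  filter_upwards with s
  have hξ' : ξ ^ 2 ≤ (|ξ₀| + 1) ^ 2 := by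
    rw [Metric.mem_ball, Real.dist_eq] at hξ
    exact sq_le_sq' (by linarith [neg_abs_le ξ₀, abs_lt.1 hξ])
      (by linarith [le_abs_self ξ₀, abs_lt.1 hξ])
  rw [Real.norm_eq_abs, abs_of_nonneg (by linarith [cos_le_one (ξ * s)])]
  refine (one_sub_cos_le_two_mul_min _).trans ?_
  gcongr
  exact (min_one_mul_sq_le ξ s).trans (by gcongr)

end LevyExponents

section LevyComparison

variable {ν : Measure ℝ} {σ : ℝ}

lemma monotoneOn_two_mul_levyG (hν : IntegrableOn (fun s => min 1 (s ^ 2)) (Ioi 0) ν) :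
    MonotoneOn (fun r => 2 * levyG σ ν r) (Ioi 0) :=
  fun _ ha _ hb hab => mul_le_mul_of_nonneg_left (levyG_monotoneOn hν ha hb hab) zero_le_two

lemma rePsi_le_two_levyG_self (hν : IntegrableOn (fun s => min 1 (s ^ 2)) (Ioi 0) ν) {x : ℝ}
    (hx : 0 < x) : rePsi σ ν x ≤ 2 * levyG σ ν x :=
  rePsi_le_two_levyG hν (abs_of_pos hx).le

lemma bddAbove_rePsi_image_Ioc (hν : IntegrableOn (fun s => min 1 (s ^ 2)) (Ioi 0) ν) :
    ∀ r, BddAbove (rePsi σ ν '' Ioc 0 r) :=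
  bddAbove_image_Ioc_of_le (monotoneOn_two_mul_levyG hν) fun _ hx => rePsi_le_two_levyG_self hν hx

lemma bddAbove_levyPhi_image_Ioc (hν : IntegrableOn (fun s => min 1 (s ^ 2)) (Ioi 0) ν) :
    ∀ r, BddAbove (levyPhi σ ν '' Ioc 0 r) :=
  bddAbove_image_Ioc_of_le (monotoneOn_two_mul_levyG hν) fun _ hx => levyPhi_le_two_levyG hν hx

lemma psiStar_eq_runSup (hν : IntegrableOn (fun s => min 1 (s ^ 2)) (Ioi 0) ν) {r : ℝ}
    (hr : 0 < r) : psiStar σ ν r = runSup (rePsi σ ν) r := by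
  have hb := bddAbove_rePsi_image_Ioc (σ := σ) hν
  have hbψ : BddAbove (rePsi σ ν '' {z | |z| ≤ r}) :=
    ⟨2 * levyG σ ν r, forall_mem_image.2 fun _ hz => rePsi_le_two_levyG hν hz⟩
  refine le_antisymm (csSup_le ⟨_, mem_image_of_mem _ (show |r| ≤ r from (abs_of_pos hr).le)⟩
    (forall_mem_image.2 fun z hz => ?_)) (runSup_le hr fun y hy => le_csSup hbψ ⟨y, ?_, rfl⟩)
  · rw [← rePsi_abs]
    rcases (abs_nonneg z).eq_or_lt with h | h
    · rw [← h, rePsi_zero]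
      exact (rePsi_nonneg r).trans (le_runSup hb ⟨hr, le_rfl⟩)
    · exact le_runSup hb ⟨h, hz⟩
  · exact (abs_of_pos hy.1).trans_le hy.2

lemma integral_one_sub_cos_mul {r s : ℝ} (hr : 0 ≤ r) (hs : s ≠ 0) :
    ∫ u in Ioc 0 r, (1 - cos (u * s)) = r - sin (r * s) / s := by
  rw [← intervalIntegral.integral_of_le hr, intervalIntegral.integral_sub intervalIntegrable_const
    ((by fun_prop : Continuous fun u => cos (u * s)).intervalIntegrable 0 r),
    intervalIntegral.integral_comp_mul_right cos hs, integral_cos]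
  simp [div_eq_inv_mul]

lemma min_one_sq_le_integral_one_sub_cos {r s : ℝ} (hr : 0 < r) (hs : 0 < s) :
    r / 20 * min 1 ((r * s) ^ 2) ≤ ∫ u in Ioc 0 r, (1 - cos (u * s)) := by
  have hdiv : r - sin (r * s) / s = (r * s - sin (r * s)) / s := by field_simp
  rw [integral_one_sub_cos_mul hr.le hs.ne', hdiv, le_div_iff₀ hs]
  calc r / 20 * min 1 ((r * s) ^ 2) * s = r * s * min 1 ((r * s) ^ 2) / 20 := by ring
    _ ≤ r * s - sin (r * s) := mul_min_one_sq_div_le_sub_sin (by positivity)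

lemma integral_min_one_le_runSup_rePsi [SFinite ν]
    (hν : IntegrableOn (fun s => min 1 (s ^ 2)) (Ioi 0) ν) {r : ℝ} (hr : 0 < r) :
    ∫ s in Ioi 0, min 1 ((r * s) ^ 2) ∂ν ≤ 20 * runSup (rePsi σ ν) r := by
  set S := runSup (rePsi σ ν) r
  have hb := bddAbove_rePsi_image_Ioc (σ := σ) hν
  have hS : 0 ≤ S := (rePsi_nonneg r).trans (le_runSup hb ⟨hr, le_rfl⟩)
  have hcos : ∀ u s, 0 ≤ 1 - cos (u * s) := fun u s => by linarith [cos_le_one (u * s)]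
  have hinner : ∀ u ∈ Ioc 0 r, ∫⁻ s in Ioi 0, ENNReal.ofReal (1 - cos (u * s)) ∂ν
      ≤ ENNReal.ofReal S := fun u hu => by
    rw [← ofReal_integral_eq_lintegral_ofReal (integrableOn_one_sub_cos hν u)
      (Eventually.of_forall (hcos u))]
    exact ENNReal.ofReal_le_ofReal
      ((le_add_of_nonneg_left (by positivity : 0 ≤ σ ^ 2 * u ^ 2)).trans (le_runSup hb hu))
  have key : ENNReal.ofReal (r / 20 * ∫ s in Ioi 0, min 1 ((r * s) ^ 2) ∂ν)
      ≤ ENNReal.ofReal (r * S) := calc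
    _ = ∫⁻ s in Ioi 0, ENNReal.ofReal (r / 20 * min 1 ((r * s) ^ 2)) ∂ν := by
      rw [← integral_const_mul, ofReal_integral_eq_lintegral_ofReal
        ((integrableOn_min_one_mul_sq hν r).const_mul _)
        (Eventually.of_forall fun _ => by positivity)]
    _ ≤ ∫⁻ s in Ioi 0, (∫⁻ u in Ioc 0 r, ENNReal.ofReal (1 - cos (u * s))) ∂ν := by
      refine setLIntegral_mono' measurableSet_Ioi fun s hs => ?_
      rw [← ofReal_integral_eq_lintegral_ofReal
        (by fun_prop : Continuous fun u => 1 - cos (u * s)).integrableOn_Ioc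
        (Eventually.of_forall fun u => hcos u s)]
      exact ENNReal.ofReal_le_ofReal (min_one_sq_le_integral_one_sub_cos hr hs)
    _ = ∫⁻ u in Ioc 0 r, ∫⁻ s in Ioi 0, ENNReal.ofReal (1 - cos (u * s)) ∂ν :=
      lintegral_lintegral_swap (Measurable.aemeasurable
        (by fun_prop : Measurable fun p : ℝ × ℝ => ENNReal.ofReal (1 - cos (p.2 * p.1))))
    _ ≤ ∫⁻ _ in Ioc 0 r, ENNReal.ofReal S := setLIntegral_mono' measurableSet_Ioc hinner
    _ = ENNReal.ofReal (r * S) := by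
      rw [setLIntegral_const, Real.volume_Ioc, sub_zero, ← ENNReal.ofReal_mul hS, mul_comm]
  rw [ENNReal.ofReal_le_ofReal_iff (by positivity)] at key
  nlinarith

lemma levyG_le_runSup_rePsi [SFinite ν] (hν : IntegrableOn (fun s => min 1 (s ^ 2)) (Ioi 0) ν)
    {r : ℝ} (hr : 0 < r) : levyG σ ν r ≤ 21 * runSup (rePsi σ ν) r := by
  have hb := bddAbove_rePsi_image_Ioc (σ := σ) hν
  have hσ : σ ^ 2 * r ^ 2 ≤ runSup (rePsi σ ν) r :=
    le_trans (le_add_of_nonneg_right (setIntegral_nonneg measurableSet_Ioi fun s _ => by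
      linarith [cos_le_one (r * s)])) (le_runSup hb ⟨hr, le_rfl⟩)
  have := integral_min_one_le_runSup_rePsi (σ := σ) hν hr
  rw [levyG]
  linarith

end LevyComparison

section LevyTail

variable {ν : Measure ℝ} {σ α c x₀ : ℝ}

lemma levyG_le_three_mul_levyPhi_add (hν : IntegrableOn (fun s => min 1 (s ^ 2)) (Ioi 0) ν)
    {x : ℝ} (hx : 0 < x) : levyG σ ν x ≤ 3 * levyPhi σ ν x + ν.real (Ioi x⁻¹) := by
  have hind : IntegrableOn ((Ioi x⁻¹).indicator 1) (Ioi 0) ν :=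
    ((integrableOn_const (C := (1:ℝ)) ((measure_mono Ioi_subset_Ici_self).trans_lt
      (measure_Ici_lt_top hν (inv_pos.2 hx))).ne).integrable_indicator
      measurableSet_Ioi).integrableOn
  have hexp := integrableOn_sq_mul_exp hν hx
  have hpt : ∀ s ∈ Ioi (0:ℝ), min 1 ((x * s) ^ 2)
      ≤ 3 * ((x * s) ^ 2 * exp (-(x * s))) + (Ioi x⁻¹).indicator 1 s := fun s hs => by
    by_cases hxs : s ∈ Ioi x⁻¹
    · rw [indicator_of_mem hxs, Pi.one_apply]
      linarith [min_le_left 1 ((x * s) ^ 2), show 0 ≤ (x * s) ^ 2 * exp (-(x * s)) by positivity]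
    · have hxs1 : x * s ≤ 1 := by
        simpa [mul_inv_cancel₀ hx.ne'] using mul_le_mul_of_nonneg_left (not_lt.1 hxs) hx.le
      have h3 : 1 ≤ 3 * exp (-(x * s)) := by
        rw [exp_neg, le_mul_inv_iff₀ (exp_pos _), one_mul]
        exact (exp_le_exp.2 hxs1).trans (exp_one_lt_d9.trans (by norm_num)).le
      rw [indicator_of_notMem hxs, add_zero]
      nlinarith [min_le_right 1 ((x * s) ^ 2), sq_nonneg (x * s)]
  have hI : ∫ s in Ioi 0, min 1 ((x * s) ^ 2) ∂ν ≤ ∫ s in Ioi 0,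
      (3 * ((x * s) ^ 2 * exp (-(x * s))) + (Ioi x⁻¹).indicator 1 s) ∂ν :=
    setIntegral_mono_on (integrableOn_min_one_mul_sq hν x) ((hexp.const_mul 3).add hind)
      measurableSet_Ioi hpt
  rw [integral_add (hexp.const_mul 3) hind, integral_const_mul,
    integral_indicator_one measurableSet_Ioi, measureReal_restrict_apply measurableSet_Ioi,
    inter_eq_left.2 (Ioi_subset_Ioi (inv_pos.2 hx).le)] at hI
  rw [levyG, levyPhi]
  nlinarith [sq_nonneg (σ * x)]

lemma measureReal_Ico_le_levyPhi (hν : IntegrableOn (fun s => min 1 (s ^ 2)) (Ioi 0) ν)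
    {y : ℝ} (hy : 0 < y) : ν.real (Ico y⁻¹ (2 * y⁻¹)) ≤ exp 2 * levyPhi σ ν y := by
  have hsub : Ico y⁻¹ (2 * y⁻¹) ⊆ Ioi 0 := fun s hs => (inv_pos.2 hy).trans_le hs.1
  have hpt : ∀ s ∈ Ioi (0:ℝ), (Ico y⁻¹ (2 * y⁻¹)).indicator 1 s
      ≤ exp 2 * ((y * s) ^ 2 * exp (-(y * s))) := fun s _ => by
    by_cases hs : s ∈ Ico y⁻¹ (2 * y⁻¹)
    · rw [indicator_of_mem hs, Pi.one_apply]
      have h1 : 1 ≤ y * s := by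
        rw [← mul_inv_cancel₀ hy.ne']; exact mul_le_mul_of_nonneg_left hs.1 hy.le
      have h2 : y * s ≤ 2 := by
        have := mul_le_mul_of_nonneg_left hs.2.le hy.le
        rwa [mul_left_comm, mul_inv_cancel₀ hy.ne', mul_one] at this
      calc (1:ℝ) = exp 2 * (1 * exp (-2)) := by rw [one_mul, ← exp_add]; norm_num
        _ ≤ exp 2 * ((y * s) ^ 2 * exp (-(y * s))) := by
          gcongr
          nlinarith
    · rw [indicator_of_notMem hs]
      positivity
  calc ν.real (Ico y⁻¹ (2 * y⁻¹)) = ∫ s in Ioi 0, (Ico y⁻¹ (2 * y⁻¹)).indicator 1 s ∂ν := by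
        rw [integral_indicator_one measurableSet_Ico, measureReal_restrict_apply measurableSet_Ico,
          inter_eq_left.2 hsub]
    _ ≤ ∫ s in Ioi 0, exp 2 * ((y * s) ^ 2 * exp (-(y * s))) ∂ν :=
        integral_mono_of_nonneg (Eventually.of_forall fun s => indicator_nonneg (by simp) s)
          ((integrableOn_sq_mul_exp hν hy).const_mul _)
          ((ae_restrict_iff' measurableSet_Ioi).2 (Eventually.of_forall hpt))
    _ ≤ exp 2 * levyPhi σ ν y := by
        rw [integral_const_mul, levyPhi]
        gcongr
        exact le_add_of_nonneg_left (by positivity)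

lemma exists_mem_Ico_dyadic {x s : ℝ} (hx : 0 < x) (hs : x⁻¹ < s) :
    ∃ k : ℕ, s ∈ Ico (x / 2 ^ k)⁻¹ (2 * (x / 2 ^ k)⁻¹) := by
  rw [inv_lt_iff_one_lt_mul₀ hx] at hs
  obtain ⟨k, hk1, hk2⟩ := exists_nat_pow_near hs.le one_lt_two
  refine ⟨k, ?_⟩
  rw [inv_div, mem_Ico, div_le_iff₀ hx, ← mul_div_assoc, lt_div_iff₀ hx, ← pow_succ']
  exact ⟨hk1, hk2⟩

lemma tsum_ofReal_mul_pow {A q : ℝ} (hA : 0 ≤ A) (hq0 : 0 ≤ q) (hq1 : q < 1) :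
    ∑' k : ℕ, ENNReal.ofReal (A * q ^ k) = ENNReal.ofReal (A * (1 - q)⁻¹) := by
  rw [← ENNReal.ofReal_tsum_of_nonneg (fun k => by positivity)
    ((summable_geometric_of_lt_one hq0 hq1).mul_left A), tsum_mul_left,
    tsum_geometric_of_lt_one hq0 hq1]

lemma measure_setOf_one_le_mul_ne_top (hν : IntegrableOn (fun s => min 1 (s ^ 2)) (Ioi 0) ν)
    (hx₀ : 0 ≤ x₀) : ν {s | 1 ≤ x₀ * s} ≠ ⊤ := by
  rcases hx₀.eq_or_lt with rfl | hx₀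
  · norm_num
  exact ((measure_mono fun s (hs : 1 ≤ x₀ * s) => (inv_le_iff_one_le_mul₀' hx₀).2 hs).trans_lt
    (measure_Ici_lt_top hν (inv_pos.2 hx₀))).ne

lemma WLSC.measure_Ico_dyadic_le (hν : IntegrableOn (fun s => min 1 (s ^ 2)) (Ioi 0) ν)
    (hscal : WLSC (levyPhi σ ν) α c x₀) (hc : 0 < c) {x : ℝ} (hx : 0 < x) {k : ℕ}
    (hk : x₀ < x / 2 ^ k) : ν (Ico (x / 2 ^ k)⁻¹ (2 * (x / 2 ^ k)⁻¹))
      ≤ ENNReal.ofReal (exp 2 / c * levyPhi σ ν x * ((2:ℝ) ^ (-α)) ^ k) := by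
  have hy : 0 < x / 2 ^ k := by positivity
  rw [← ofReal_measureReal ((measure_mono Ico_subset_Ici_self).trans_lt
    (measure_Ici_lt_top hν (inv_pos.2 hy))).ne]
  refine ENNReal.ofReal_le_ofReal ((measureReal_Ico_le_levyPhi (σ := σ) hν hy).trans ?_)
  calc exp 2 * levyPhi σ ν (x / 2 ^ k)
      ≤ exp 2 * (c⁻¹ * ((2:ℝ) ^ (-α)) ^ k * levyPhi σ ν x) :=
        mul_le_mul_of_nonneg_left (hscal.apply_div_two_pow_le hc hk) (exp_pos 2).le
    _ = exp 2 / c * levyPhi σ ν x * ((2:ℝ) ^ (-α)) ^ k := by ring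

/-- Of the dyadic pieces `[2ᵏ/x, 2ᵏ⁺¹/x)` of the tail, those with `x / 2ᵏ ≤ x₀` lie in
`{s | 1 ≤ x₀ s}`; the others are controlled by the scaling of `levyPhi`. -/
lemma measureReal_Ioi_inv_le (hν : IntegrableOn (fun s => min 1 (s ^ 2)) (Ioi 0) ν)
    (hscal : WLSC (levyPhi σ ν) α c x₀) (hα : 0 < α) (hc : 0 < c) (hx₀ : 0 ≤ x₀) {x : ℝ}
    (hx : x₀ < x) :
    ν.real (Ioi x⁻¹) ≤ exp 2 / c / (1 - 2 ^ (-α)) * levyPhi σ ν x + ν.real {s | 1 ≤ x₀ * s} := by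
  have hx0 : 0 < x := hx₀.trans_lt hx
  set q : ℝ := 2 ^ (-α)
  have hq0 : 0 < q := rpow_pos_of_pos two_pos _
  have hq1 : q < 1 := rpow_lt_one_of_one_lt_of_neg one_lt_two (neg_neg_of_pos hα)
  set A := exp 2 / c * levyPhi σ ν x
  have hA : 0 ≤ A := by have := levyPhi_nonneg (σ := σ) (ν := ν) x; positivity
  set B := {s | 1 ≤ x₀ * s}
  set J : ℕ → Set ℝ := fun k => if x₀ < x / 2 ^ k then Ico (x / 2 ^ k)⁻¹ (2 * (x / 2 ^ k)⁻¹) else ∅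
  have hcover : Ioi x⁻¹ ⊆ (⋃ k, J k) ∪ B := fun s hs => by
    obtain ⟨k, hk⟩ := exists_mem_Ico_dyadic hx0 hs
    by_cases hxk : x₀ < x / 2 ^ k
    · exact Or.inl (mem_iUnion.2 ⟨k, by simpa only [J, if_pos hxk] using hk⟩)
    refine Or.inr (show 1 ≤ x₀ * s from ?_)
    calc (1:ℝ) = x / 2 ^ k * (x / 2 ^ k)⁻¹ := (mul_inv_cancel₀ (by positivity)).symm
      _ ≤ x₀ * s := mul_le_mul (not_lt.1 hxk) hk.1 (by positivity) hx₀
  have hJ : ∀ k, ν (J k) ≤ ENNReal.ofReal (A * q ^ k) := fun k => by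
    by_cases hxk : x₀ < x / 2 ^ k
    · simpa only [J, if_pos hxk] using hscal.measure_Ico_dyadic_le hν hc hx0 hxk
    · simp [J, if_neg hxk]
  have hB := measure_setOf_one_le_mul_ne_top hν hx₀
  have htotal : ν (Ioi x⁻¹) ≤ ENNReal.ofReal (A * (1 - q)⁻¹ + ν.real B) := calc
    ν (Ioi x⁻¹) ≤ ∑' k, ν (J k) + ν B :=
        (measure_mono hcover).trans ((measure_union_le _ _).trans
          (add_le_add (measure_iUnion_le _) le_rfl))
    _ ≤ ENNReal.ofReal (A * (1 - q)⁻¹) + ENNReal.ofReal (ν.real B) := by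
        rw [ofReal_measureReal hB, ← tsum_ofReal_mul_pow hA hq0.le hq1]
        exact add_le_add (ENNReal.tsum_le_tsum hJ) le_rfl
    _ = ENNReal.ofReal (A * (1 - q)⁻¹ + ν.real B) :=
        (ENNReal.ofReal_add (by have := hq1; positivity) measureReal_nonneg).symm
  calc ν.real (Ioi x⁻¹) ≤ A * (1 - q)⁻¹ + ν.real B :=
        ENNReal.toReal_le_of_le_ofReal (by have := hq1; positivity) htotal
    _ = exp 2 / c / (1 - q) * levyPhi σ ν x + ν.real B := by simp only [A]; ring

end LevyTail

section LevyProfiles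

variable {ν : Measure ℝ} {σ α c x₀ : ℝ}

lemma tendsto_two_mul_levyG_zero (hν : IntegrableOn (fun s => min 1 (s ^ 2)) (Ioi 0) ν) :
    Tendsto (fun r => 2 * levyG σ ν r) (𝓝 0) (𝓝 0) := by
  simpa using (tendsto_levyG_zero hν).const_mul 2

lemma isGrowthProfile_runSup_levyPhi (hν : IntegrableOn (fun s => min 1 (s ^ 2)) (Ioi 0) ν)
    (hUV : 0 < σ ∨ ∫⁻ x in Ioo (0:ℝ) 1, ENNReal.ofReal x ∂ν = ⊤)
    (hscal : WLSC (levyPhi σ ν) α c x₀) (hα : 0 < α) (hc : 0 < c) (hx₀ : 0 ≤ x₀) :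
    IsGrowthProfile (runSup (levyPhi σ ν)) := by
  have hb := bddAbove_levyPhi_image_Ioc (σ := σ) hν
  refine isGrowthProfile_runSup (levyPhi_continuousOn hν) (monotoneOn_two_mul_levyG hν)
    (tendsto_two_mul_levyG_zero hν) (fun _ hx => levyPhi_le_two_levyG hν hx)
    (fun x hx => (levyPhi_pos hν hUV hx).trans_le (le_runSup hb ⟨hx, le_rfl⟩)) fun s => ?_
  obtain ⟨z, hz, hsz⟩ := hscal.exists_lt_apply hα hc (lt_add_one x₀) (by linarith)
    (levyPhi_pos hν hUV (by linarith)) s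
  have hz0 : 0 < z := by linarith
  exact ⟨z, hz0, hsz.trans_le (le_runSup hb ⟨hz0, le_rfl⟩)⟩

lemma runSup_levyPhi_le_runSup_rePsi [SFinite ν]
    (hν : IntegrableOn (fun s => min 1 (s ^ 2)) (Ioi 0) ν) {x : ℝ} (hx : 0 < x) :
    runSup (levyPhi σ ν) x ≤ 42 * runSup (rePsi σ ν) x := by
  have := levyG_le_runSup_rePsi (σ := σ) hν hx
  calc _ ≤ 2 * levyG σ ν x := runSup_le_of_le (monotoneOn_two_mul_levyG hν)
        (fun _ hy => levyPhi_le_two_levyG hν hy) hx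
    _ ≤ 42 * runSup (rePsi σ ν) x := by linarith

lemma isGrowthProfile_runSup_rePsi [SFinite ν]
    (hν : IntegrableOn (fun s => min 1 (s ^ 2)) (Ioi 0) ν)
    (hF : IsGrowthProfile (runSup (levyPhi σ ν))) : IsGrowthProfile (runSup (rePsi σ ν)) := by
  refine isGrowthProfile_runSup (rePsi_continuous hν).continuousOn (monotoneOn_two_mul_levyG hν)
    (tendsto_two_mul_levyG_zero hν) (fun _ hx => rePsi_le_two_levyG_self hν hx)
    (fun x hx => by linarith [hF.pos x hx, runSup_levyPhi_le_runSup_rePsi (σ := σ) hν hx])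
    fun s => ?_
  obtain ⟨x, hx, hsx⟩ := hF.exists_gt (42 * s)
  exact ⟨x, hx, by linarith [runSup_levyPhi_le_runSup_rePsi (σ := σ) hν hx]⟩

lemma exists_runSup_rePsi_le_mul_runSup_levyPhi
    (hν : IntegrableOn (fun s => min 1 (s ^ 2)) (Ioi 0) ν)
    (hUV : 0 < σ ∨ ∫⁻ x in Ioo (0:ℝ) 1, ENNReal.ofReal x ∂ν = ⊤)
    (hscal : WLSC (levyPhi σ ν) α c x₀) (hα : 0 < α) (hc : 0 < c) (hx₀ : 0 ≤ x₀) :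
    ∃ B, 1 ≤ B ∧ ∀ x, x₀ < x → runSup (rePsi σ ν) x ≤ B * runSup (levyPhi σ ν) x := by
  have hb := bddAbove_levyPhi_image_Ioc (σ := σ) hν
  set K := ν.real {s | 1 ≤ x₀ * s}
  set C := exp 2 / c / (1 - 2 ^ (-α))
  have hC : 0 ≤ C := div_nonneg (by positivity)
    (sub_nonneg.2 (rpow_le_one_of_one_le_of_nonpos one_le_two (by linarith)))
  have hΦ₀ : 0 ≤ levyPhi σ ν x₀ := levyPhi_nonneg x₀
  have hK0 : 0 ≤ K := measureReal_nonneg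
  refine ⟨2 * (3 + C + K / levyPhi σ ν x₀), by nlinarith [div_nonneg hK0 hΦ₀], fun x hx => ?_⟩
  have hx0 : 0 < x := hx₀.trans_lt hx
  have hΦ : levyPhi σ ν x ≤ runSup (levyPhi σ ν) x := le_runSup hb ⟨hx0, le_rfl⟩
  -- the part of the tail beyond `1 / x₀` is a constant, absorbed by `levyPhi σ ν x₀`
  have hK : K ≤ K / levyPhi σ ν x₀ * runSup (levyPhi σ ν) x := by
    rcases hx₀.eq_or_lt with rfl | hx₀
    · norm_num [K]
    rw [div_mul_eq_mul_div, le_div_iff₀ (levyPhi_pos hν hUV hx₀)]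
    exact mul_le_mul_of_nonneg_left (le_runSup hb ⟨hx₀, hx.le⟩) hK0
  calc runSup (rePsi σ ν) x ≤ 2 * levyG σ ν x := runSup_le_of_le (monotoneOn_two_mul_levyG hν)
        (fun _ hy => rePsi_le_two_levyG_self hν hy) hx0
    _ ≤ 2 * (3 * levyPhi σ ν x + (C * levyPhi σ ν x + K)) := by
        gcongr
        exact (levyG_le_three_mul_levyPhi_add hν hx0).trans
          (add_le_add le_rfl (measureReal_Ioi_inv_le hν hscal hα hc hx₀ hx))
    _ ≤ 2 * (3 + C + K / levyPhi σ ν x₀) * runSup (levyPhi σ ν) x := by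
        nlinarith [mul_le_mul_of_nonneg_left hΦ hC]

end LevyProfiles

theorem statement13_general
    (ν : Measure ℝ) [SigmaFinite ν]
    (hint : ∫⁻ x in Ioi (0:ℝ), ENNReal.ofReal (min 1 (x ^ 2)) ∂ν ≠ ⊤)
    (σ : ℝ)
    (φ'' : ℝ → ℝ)
    (hφ'' : ∀ l : ℝ, 0 < l → φ'' l = 2 * σ ^ 2 + ∫ x in Ioi (0:ℝ), x ^ 2 * Real.exp (-(l * x)) ∂ν)
    (hUV : 0 < σ ∨ ∫⁻ x in Ioo (0:ℝ) 1, ENNReal.ofReal x ∂ν = ⊤)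
    (α c x₀ : ℝ) (hα : 0 < α) (hc : c ∈ Ioc (0:ℝ) 1) (hx₀ : 0 ≤ x₀)
    (hscal : WLSC φ'' (α - 2) c x₀) :
    (∃ C : ℝ, 1 ≤ C ∧ ∀ x : ℝ, x₀ < x →
      C⁻¹ * bigPhiStar φ'' x ≤ psiStar σ ν x ∧ psiStar σ ν x ≤ C * bigPhiStar φ'' x) ∧
    (∃ C : ℝ, 1 ≤ C ∧ ∀ r : ℝ, bigPhi φ'' x₀ < r →
      C⁻¹ * bigPhiInv φ'' r ≤ psiInv σ ν r ∧ psiInv σ ν r ≤ C * bigPhiInv φ'' r) ∧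
    (∃ C : ℝ, 1 ≤ C ∧ ∀ l : ℝ, 1 ≤ l → ∀ r : ℝ, bigPhi φ'' x₀ < r →
      bigPhiInv φ'' (l * r) ≤ C * l ^ (1 / α) * bigPhiInv φ'' r) := by
  have hν := integrableOn_min_one_sq hint
  have hΦ : EqOn (bigPhi φ'') (levyPhi σ ν) (Ici 0) := fun x hx => bigPhi_eq_levyPhi hφ'' hx
  have hscalΦ : WLSC (levyPhi σ ν) α c x₀ :=
    hscal.bigPhi_of_sub_two.congr (hΦ.mono Ioi_subset_Ici_self) hx₀
  have hF := isGrowthProfile_runSup_levyPhi hν hUV hscalΦ hα hc.1 hx₀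
  have hG := isGrowthProfile_runSup_rePsi hν hF
  have hFG : ∀ x, 0 < x → runSup (levyPhi σ ν) x ≤ 42 * runSup (rePsi σ ν) x :=
    fun _ hx => runSup_levyPhi_le_runSup_rePsi hν hx
  obtain ⟨B, hB, hGF⟩ := exists_runSup_rePsi_le_mul_runSup_levyPhi hν hUV hscalΦ hα hc.1 hx₀
  obtain ⟨x₁, hx₀x₁, hx₁, hscal₁⟩ := hscalΦ.exists_runSup (bddAbove_levyPhi_image_Ioc hν) hα
    hc.1 hx₀ fun _ hx => levyPhi_pos hν hUV hx
  have hstar : bigPhiStar φ'' = runSup (levyPhi σ ν) := runSup_congr (hΦ.mono Ioi_subset_Ici_self)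
  have hψ : EqOn (psiStar σ ν) (runSup (rePsi σ ν)) (Ioi 0) := fun _ hr => psiStar_eq_runSup hν hr
  have hinvΦ : bigPhiInv φ'' = genInv (runSup (levyPhi σ ν)) := by rw [← hstar]; rfl
  rw [hΦ hx₀, hinvΦ, show psiInv σ ν = genInv (runSup (rePsi σ ν)) from genInv_congr hψ]
  refine ⟨⟨max 42 B, le_max_of_le_left (by norm_num), fun x hx => ?_⟩,
    genInv_comparable hF hG hscal₁ hc hα (hx₀.trans hx₀x₁) (by norm_num) hB hFG
      (fun x hx => hGF x (hx₀x₁.trans_lt hx)) (levyPhi_nonneg x₀) hx₁,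
    genInv_mul_le hF hscal₁ hc hα (hx₀.trans hx₀x₁) (levyPhi_nonneg x₀) hx₁⟩
  have hx0 : 0 < x := hx₀.trans_lt hx
  rw [hstar, hψ hx0, inv_mul_le_iff₀ (by positivity)]
  exact ⟨(hFG x hx0).trans (mul_le_mul_of_nonneg_right (le_max_left _ _) (hG.pos x hx0).le),
    (hGF x hx).trans (mul_le_mul_of_nonneg_right (le_max_right _ _) (hF.pos x hx0).le)⟩

/-- Proposition 8. -/
theorem statement13
    (ν : Measure ℝ) [SigmaFinite ν]
    (hint : ∫⁻ x in Ioi (0:ℝ), ENNReal.ofReal (min 1 (x ^ 2)) ∂ν ≠ ⊤)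
    (σ b : ℝ) (hσ : 0 ≤ σ)
    (φ φ' φ'' : ℝ → ℝ)
    (hφ : ∀ l : ℝ, 0 ≤ l → φ l = σ ^ 2 * l ^ 2 - b * l +
      ∫ x in Ioi (0:ℝ), (Real.exp (-(l * x)) - 1 + l * x * (if x < 1 then 1 else 0)) ∂ν)
    (hD1 : ∀ x : ℝ, 0 < x → HasDerivAt φ (φ' x) x)
    (hD2 : ∀ x : ℝ, 0 < x → HasDerivAt φ' (φ'' x) x)
    (hφ'' : ∀ l : ℝ, 0 < l → φ'' l = 2 * σ ^ 2 + ∫ x in Ioi (0:ℝ), x ^ 2 * Real.exp (-(l * x)) ∂ν)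
    (hUV : 0 < σ ∨ ∫⁻ x in Ioo (0:ℝ) 1, ENNReal.ofReal x ∂ν = ⊤)
    (α c x₀ : ℝ) (hα : 0 < α) (hc : c ∈ Ioc (0:ℝ) 1) (hx₀ : 0 ≤ x₀)
    (hscal : WLSC φ'' (α - 2) c x₀) :
    (∃ C : ℝ, 1 ≤ C ∧ ∀ x : ℝ, x₀ < x →
      C⁻¹ * bigPhiStar φ'' x ≤ psiStar σ ν x ∧ psiStar σ ν x ≤ C * bigPhiStar φ'' x) ∧
    (∃ C : ℝ, 1 ≤ C ∧ ∀ r : ℝ, bigPhi φ'' x₀ < r →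
      C⁻¹ * bigPhiInv φ'' r ≤ psiInv σ ν r ∧ psiInv σ ν r ≤ C * bigPhiInv φ'' r) ∧
    (∃ C : ℝ, 1 ≤ C ∧ ∀ l : ℝ, 1 ≤ l → ∀ r : ℝ, bigPhi φ'' x₀ < r →
      bigPhiInv φ'' (l * r) ≤ C * l ^ (1 / α) * bigPhiInv φ'' r) :=
  statement13_general ν hint σ φ'' hφ'' hUV α c x₀ hα hc hx₀ hscal

end
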